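/- arXiv:1908.05319 — 2 statements merged into one kernel-verified Lean document; each statement's English description precedes it below -/
import Mathlib

section
/- Under a nontrivial sparse configuration (π_{j0} = 1 for all j ∉ S and π_{j0} < 1 for all j ∈ S, with S nonempty), the oracle sGBH and the oracle GBH reject exactly the same set of hypotheses at the same nominal FDR level α. Concretely: let m_S = Σ_{j∈S} n_j, π_0 = (1/m)Σ_j π_{j0}n_j and π̃_0 = (Σ_{j∈S}π_{j0}n_j)/m_S; then (1-π̃_0)·m_S = (1-π_0)·m, the GBH-weighted p-values p*_{jk} = p_{jk}·π_{j0}(1-π_0)/(1-π_{j0}) (j∈S) and sGBH-weighted p-values p̃_{jk} = p_{jk}·π_{j0}(1-π̃_0)/(1-π_{j0}) satisfy p̃_{jk}/p*_{jk} = (1-π̃_0)/(1-π_0) = m/m_S, and the BH procedure at level α applied to {p*_{jk}} with denominator m rejects the same hypotheses as BH applied to {p̃_{jk}} with denominator m_S. -/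
/-! Since `π_{j0} = 1` off `S`, groups outside `S` contribute nothing to `(1 - π₀)·m`, which is
therefore the same sum `∑_{j ∈ S} (1 - π_{j0}) n_j` as `(1 - π̃₀)·m_S`. Hence the sGBH weights are
the GBH weights scaled by `c = m / m_S`, and scaling the p-values by `c` while replacing the BH
denominator `m` by `m_S` leaves every BH comparison `q_(i) ≤ iα/m` unchanged. -/

open Finset

theorem one_sub_weightedMean_mul {ι : Type*} (s : Finset ι) (w c : ι → ℝ) {M : ℝ}
    (hM : M = ∑ j ∈ s, c j) (hM0 : M ≠ 0) :
    (1 - (∑ j ∈ s, w j * c j) / M) * M = ∑ j ∈ s, (1 - w j) * c j := by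
  rw [sub_mul, one_mul, div_mul_cancel₀ _ hM0, hM, ← sum_sub_distrib]
  exact sum_congr rfl fun j _ => by ring

theorem sum_one_sub_mul_eq_of_eq_one_of_notMem {ι : Type*} [Fintype ι] (S : Finset ι)
    (w c : ι → ℝ) (hw : ∀ j ∉ S, w j = 1) :
    ∑ j, (1 - w j) * c j = ∑ j ∈ S, (1 - w j) * c j :=
  (sum_subset (subset_univ S) fun j _ hj => by rw [hw j hj, sub_self, zero_mul]).symm

/-- The number of BH rejections at level `α` with denominator `d` for sorted `q 1 ≤ … ≤ q N`:
the largest `i` with `q i ≤ iα/d`, or `0` if there is none. -/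
noncomputable def bhCount (q : ℕ → ℝ) (α d : ℝ) (N : ℕ) : ℕ :=
  ((Icc 1 N).filter fun i => q i ≤ (i : ℝ) * α / d).sup id

theorem bhCount_div_mul {d d' : ℝ} (hd : 0 < d) (hd' : 0 < d') (q : ℕ → ℝ) (α : ℝ) (N : ℕ) :
    bhCount (fun i => d / d' * q i) α d' N = bhCount q α d N := by
  unfold bhCount
  congr 1
  refine filter_congr fun i _ => ?_
  beta_reduce
  rw [div_mul_eq_mul_div, div_le_div_iff_of_pos_right hd', le_div_iff₀' hd]

theorem stmt2_general (l : ℕ) (n : Fin l → ℕ) (hn : ∀ j, 0 < n j)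
    (piG : Fin l → ℝ)
    (S : Finset (Fin l)) (hS : S.Nonempty)
    (hsparse1 : ∀ j ∉ S, piG j = 1) (hsparse2 : ∀ j ∈ S, piG j < 1)
    (m mS : ℕ) (hm : (m : ℝ) = ∑ j, (n j : ℝ)) (hmS : (mS : ℝ) = ∑ j ∈ S, (n j : ℝ))
    (pi0 pit0 : ℝ)
    (hpi0 : pi0 = (∑ j, piG j * (n j : ℝ)) / (m : ℝ))
    (hpit0 : pit0 = (∑ j ∈ S, piG j * (n j : ℝ)) / (mS : ℝ))
    (α : ℝ) :
    ((1 - pit0) * (mS : ℝ) = (1 - pi0) * (m : ℝ)) ∧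
    (∀ j ∈ S, ∀ x : ℝ, 0 < x → 0 < piG j →
      (x * piG j * (1 - pit0) / (1 - piG j)) / (x * piG j * (1 - pi0) / (1 - piG j)) =
        (1 - pit0) / (1 - pi0) ∧
      (1 - pit0) / (1 - pi0) = (m : ℝ) / (mS : ℝ)) ∧
    (∀ q : ℕ → ℝ, (∀ i i', i ≤ i' → q i ≤ q i') →
      ((Finset.Icc 1 mS).filter (fun i => q i ≤ (i : ℝ) * α / (m : ℝ))).sup id =
        ((Finset.Icc 1 mS).filter
          (fun i => ((1 - pit0) / (1 - pi0)) * q i ≤ (i : ℝ) * α / (mS : ℝ))).sup id) := by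
  have hn' : ∀ j, (0 : ℝ) < n j := fun j => Nat.cast_pos.mpr (hn j)
  have hmS0 : (0 : ℝ) < mS := hmS ▸ sum_pos (fun j _ => hn' j) hS
  have hm0 : (0 : ℝ) < m := hm ▸ sum_pos (fun j _ => hn' j) (hS.mono (subset_univ S))
  have hpos : 0 < ∑ j ∈ S, (1 - piG j) * (n j : ℝ) :=
    sum_pos (fun j hj => mul_pos (sub_pos.mpr (hsparse2 j hj)) (hn' j)) hS
  have hB : (1 - pi0) * m = ∑ j ∈ S, (1 - piG j) * (n j : ℝ) := by
    rw [hpi0, one_sub_weightedMean_mul _ _ _ hm hm0.ne',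
      sum_one_sub_mul_eq_of_eq_one_of_notMem S piG _ hsparse1]
  have hkey : (1 - pit0) * mS = (1 - pi0) * m :=
    (hpit0 ▸ one_sub_weightedMean_mul S piG _ hmS hmS0.ne').trans hB.symm
  have h1pi0 : 0 < 1 - pi0 := pos_of_mul_pos_left (hB ▸ hpos) hm0.le
  have hc : (1 - pit0) / (1 - pi0) = (m : ℝ) / mS := by
    rw [div_eq_div_iff h1pi0.ne' hmS0.ne', hkey, mul_comm]
  refine ⟨hkey, fun j hj x hx hpj => ⟨?_, hc⟩, fun q _ => ?_⟩
  · have : 1 - piG j ≠ 0 := (sub_pos.mpr (hsparse2 j hj)).ne'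
    field_simp
  · rw [hc]
    exact (bhCount_div_mul hm0 hmS0 q α mS).symm

/-- under a nontrivial sparse configuration, the oracle sGBH and oracle GBH
reject the same hypotheses. Concretely: `(1-π̃₀)·m_S = (1-π₀)·m`; the sGBH- and
GBH-weighted p-values satisfy `p̃ * (1-π₀) = p* * (1-π̃₀)` and `p̃/p* = (1-π̃₀)/(1-π₀) = m/m_S`;
and BH at level α applied to the sorted GBH-weighted p-values `q` with denominator `m`
rejects the same number as BH applied to `((1-π̃₀)/(1-π₀))·q` with denominator `m_S`. -/
theorem stmt2 (l : ℕ) (n : Fin l → ℕ) (hn : ∀ j, 0 < n j)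
    (piG : Fin l → ℝ) (hpiG0 : ∀ j, 0 ≤ piG j)
    (S : Finset (Fin l)) (hS : S.Nonempty)
    (hsparse1 : ∀ j ∉ S, piG j = 1) (hsparse2 : ∀ j ∈ S, piG j < 1)
    (m mS : ℕ) (hm : (m : ℝ) = ∑ j, (n j : ℝ)) (hmS : (mS : ℝ) = ∑ j ∈ S, (n j : ℝ))
    (pi0 pit0 : ℝ)
    (hpi0 : pi0 = (∑ j, piG j * (n j : ℝ)) / (m : ℝ))
    (hpit0 : pit0 = (∑ j ∈ S, piG j * (n j : ℝ)) / (mS : ℝ))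
    (α : ℝ) (hα : 0 < α) :
    ((1 - pit0) * (mS : ℝ) = (1 - pi0) * (m : ℝ)) ∧
    (∀ j ∈ S, ∀ x : ℝ, 0 < x → 0 < piG j →
      (x * piG j * (1 - pit0) / (1 - piG j)) / (x * piG j * (1 - pi0) / (1 - piG j)) =
        (1 - pit0) / (1 - pi0) ∧
      (1 - pit0) / (1 - pi0) = (m : ℝ) / (mS : ℝ)) ∧
    (∀ q : ℕ → ℝ, (∀ i i', i ≤ i' → q i ≤ q i') →
      ((Finset.Icc 1 mS).filter (fun i => q i ≤ (i : ℝ) * α / (m : ℝ))).sup id =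
        ((Finset.Icc 1 mS).filter
          (fun i => ((1 - pit0) / (1 - pi0)) * q i ≤ (i : ℝ) * α / (mS : ℝ))).sup id) :=
  stmt2_general l n hn piG S hS hsparse1 hsparse2 m mS hm hmS pi0 pit0 hpi0 hpit0 α
end

section
/- Let p be a random variable with P(p ≤ t) ≤ t for all t ∈ [0,1] (super-uniform), independent of a random vector q, let C = C(q) ∈ (0,∞) be measurable in q, and fix r ≥ 1 and a ∈ (0,1]. Then E[(1/r)·1{p ≤ r·a·C}] ≤ a·E[C]. -/
/-!
Super-uniformity bounds `P(p ≤ t)` by `t` for every real `t`, not only on `[0, 1]`. By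
independence, `P(p ≤ C(q))` is the average over the law of `q` of `P(p ≤ c)` at `c = C(q)`,
hence at most `E[C]`; with `C = r a g(q)` the factor `r` cancels against `1/r`.
-/

open MeasureTheory ProbabilityTheory ENNReal

namespace ProbabilityTheory

variable {Ω E : Type*} [MeasurableSpace Ω] [MeasurableSpace E] {μ : Measure Ω}
  {p : Ω → ℝ} {q : Ω → E}

lemma measure_le_le_ofReal_of_superUniform [IsProbabilityMeasure μ]
    (hsuper : ∀ t : ℝ, 0 ≤ t → t ≤ 1 → μ {ω | p ω ≤ t} ≤ ENNReal.ofReal t) (t : ℝ) :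
    μ {ω | p ω ≤ t} ≤ ENNReal.ofReal t := by
  rcases lt_or_ge t 0 with ht | ht
  · calc μ {ω | p ω ≤ t} ≤ μ {ω | p ω ≤ 0} := measure_mono fun ω hω => le_trans hω ht.le
      _ ≤ ENNReal.ofReal 0 := hsuper 0 le_rfl zero_le_one
      _ = ENNReal.ofReal t := by rw [ofReal_zero, ofReal_of_nonpos ht.le]
  rcases le_or_gt t 1 with ht1 | ht1
  · exact hsuper t ht ht1
  · exact prob_le_one.trans (one_le_ofReal.mpr ht1.le)

lemma IndepFun.measure_le_comp_eq_lintegral [IsFiniteMeasure μ] (hindep : IndepFun p q μ)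
    (hp : Measurable p) (hq : Measurable q) {c : E → ℝ} (hc : Measurable c) :
    μ {ω | p ω ≤ c (q ω)} = ∫⁻ y, μ {ω | p ω ≤ c y} ∂(μ.map q) := by
  have hT : MeasurableSet {z : ℝ × E | z.1 ≤ c z.2} :=
    measurableSet_le measurable_fst (hc.comp measurable_snd)
  have hlaw : μ.map (fun ω => (p ω, q ω)) = (μ.map p).prod (μ.map q) :=
    (indepFun_iff_map_prod_eq_prod_map_map hp.aemeasurable hq.aemeasurable).mp hindep
  calc μ {ω | p ω ≤ c (q ω)} = μ.map (fun ω => (p ω, q ω)) {z | z.1 ≤ c z.2} := by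
        rw [Measure.map_apply (hp.prodMk hq) hT]; rfl
    _ = ∫⁻ y, μ.map p {x | x ≤ c y} ∂(μ.map q) := by
        rw [hlaw, Measure.prod_apply_symm hT]; rfl
    _ = ∫⁻ y, μ {ω | p ω ≤ c y} ∂(μ.map q) :=
        lintegral_congr fun y => Measure.map_apply hp measurableSet_Iic

lemma measure_le_comp_le_lintegral_ofReal [IsProbabilityMeasure μ]
    (hsuper : ∀ t : ℝ, 0 ≤ t → t ≤ 1 → μ {ω | p ω ≤ t} ≤ ENNReal.ofReal t)
    (hindep : IndepFun p q μ) (hp : Measurable p) (hq : Measurable q)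
    {c : E → ℝ} (hc : Measurable c) :
    μ {ω | p ω ≤ c (q ω)} ≤ ∫⁻ ω, ENNReal.ofReal (c (q ω)) ∂μ := by
  calc μ {ω | p ω ≤ c (q ω)} = ∫⁻ y, μ {ω | p ω ≤ c y} ∂(μ.map q) :=
        hindep.measure_le_comp_eq_lintegral hp hq hc
    _ ≤ ∫⁻ y, ENNReal.ofReal (c y) ∂(μ.map q) :=
        lintegral_mono fun y => measure_le_le_ofReal_of_superUniform hsuper (c y)
    _ = ∫⁻ ω, ENNReal.ofReal (c (q ω)) ∂μ := lintegral_map hc.ennreal_ofReal hq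

lemma measureReal_le_comp_le_integral [IsProbabilityMeasure μ]
    (hsuper : ∀ t : ℝ, 0 ≤ t → t ≤ 1 → μ {ω | p ω ≤ t} ≤ ENNReal.ofReal t)
    (hindep : IndepFun p q μ) (hp : Measurable p) (hq : Measurable q)
    {c : E → ℝ} (hc : Measurable c) (hc_nonneg : ∀ ω, 0 ≤ c (q ω))
    (hc_int : Integrable (fun ω => c (q ω)) μ) :
    μ.real {ω | p ω ≤ c (q ω)} ≤ ∫ ω, c (q ω) ∂μ := by
  refine toReal_le_of_le_ofReal (integral_nonneg hc_nonneg) ?_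
  rw [ofReal_integral_eq_lintegral_ofReal hc_int (ae_of_all _ hc_nonneg)]
  exact measure_le_comp_le_lintegral_ofReal hsuper hindep hp hq hc

end ProbabilityTheory

theorem stmt11_general {Ω E : Type*} [MeasurableSpace Ω] [MeasurableSpace E]
    (μ : Measure Ω) [IsProbabilityMeasure μ]
    (p : Ω → ℝ) (q : Ω → E) (g : E → ℝ)
    (hp : Measurable p) (hq : Measurable q) (hg : Measurable g)
    (hsuper : ∀ t : ℝ, 0 ≤ t → t ≤ 1 → μ {ω | p ω ≤ t} ≤ ENNReal.ofReal t)
    (hindep : IndepFun p q μ)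
    (hCpos : ∀ ω, 0 < g (q ω)) (hCint : Integrable (fun ω => g (q ω)) μ)
    (r : ℕ) (hr : 1 ≤ r) (a : ℝ) (ha : 0 < a) :
    ∫ ω, (1 / (r : ℝ)) * Set.indicator {ω' | p ω' ≤ (r : ℝ) * a * g (q ω')}
        (fun _ => (1 : ℝ)) ω ∂μ ≤ a * ∫ ω, g (q ω) ∂μ := by
  have hr0 : (0 : ℝ) < r := by exact_mod_cast hr
  have hS : MeasurableSet {ω | p ω ≤ (r : ℝ) * a * g (q ω)} :=
    measurableSet_le hp (by fun_prop)
  have hbound := measureReal_le_comp_le_integral (c := fun y => (r : ℝ) * a * g y)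
    hsuper hindep hp hq (by fun_prop) (fun ω => (mul_pos (mul_pos hr0 ha) (hCpos ω)).le)
    (hCint.const_mul _)
  calc ∫ ω, (1 / (r : ℝ)) * Set.indicator {ω' | p ω' ≤ (r : ℝ) * a * g (q ω')}
          (fun _ => (1 : ℝ)) ω ∂μ
      = 1 / r * μ.real {ω | p ω ≤ (r : ℝ) * a * g (q ω)} := by
        rw [integral_const_mul, ← integral_indicator_one hS]; rfl
    _ ≤ 1 / r * ∫ ω, (r : ℝ) * a * g (q ω) ∂μ := by gcongr
    _ = a * ∫ ω, g (q ω) ∂μ := by rw [integral_const_mul]; field_simp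

/-- if `p` is super-uniform, independent of `q`, `C = g ∘ q > 0` is
integrable, `r ≥ 1` and `a ∈ (0,1]`, then `E[(1/r)·1{p ≤ r·a·C}] ≤ a·E[C]`. -/
theorem stmt11 {Ω E : Type*} [MeasurableSpace Ω] [MeasurableSpace E]
    (μ : Measure Ω) [IsProbabilityMeasure μ]
    (p : Ω → ℝ) (q : Ω → E) (g : E → ℝ)
    (hp : Measurable p) (hq : Measurable q) (hg : Measurable g)
    (hsuper : ∀ t : ℝ, 0 ≤ t → t ≤ 1 → μ {ω | p ω ≤ t} ≤ ENNReal.ofReal t)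
    (hindep : IndepFun p q μ)
    (hCpos : ∀ ω, 0 < g (q ω)) (hCint : Integrable (fun ω => g (q ω)) μ)
    (r : ℕ) (hr : 1 ≤ r) (a : ℝ) (ha : 0 < a) (ha1 : a ≤ 1) :
    ∫ ω, (1 / (r : ℝ)) * Set.indicator {ω' | p ω' ≤ (r : ℝ) * a * g (q ω')}
        (fun _ => (1 : ℝ)) ω ∂μ ≤ a * ∫ ω, g (q ω) ∂μ :=
  stmt11_general μ p q g hp hq hg hsuper hindep hCpos hCint r hr a ha
end
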